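/- Let m be an odd positive integer, let G be a finite simple graph, and let ℋ = {H_j}_{j∈J} be a finite family of connected non-null subgraphs of G. Then tree-α(G^m(ℋ)) ≤ tree-α(G), where G^m(ℋ) is well defined because each H_j, being a connected subgraph of G, is also a connected subgraph of G^m. -/

import Mathlib

open SimpleGraph

variable {V : Type*}

/-- The `k`-th power of a graph: distinct vertices are adjacent iff their distance is at most `k`. -/
def SimpleGraph.power (G : SimpleGraph V) (k : ℕ) : SimpleGraph V where
  Adj u v := u ≠ v ∧ G.Reachable u v ∧ G.dist u v ≤ k
  symm := ⟨by
    rintro u v ⟨h1, h2, h3⟩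
    exact ⟨h1.symm, h2.symm, by rwa [SimpleGraph.dist_comm]⟩⟩
  loopless := ⟨fun u h => h.1 rfl⟩

/-- A set of vertices is independent if it is pairwise non-adjacent. -/
def SimpleGraph.IsIndepSetOn (G : SimpleGraph V) (s : Set V) : Prop :=
  s.Pairwise fun u v => ¬ G.Adj u v

/-- The independence number of the subgraph of `G` induced by `X`. -/
noncomputable def indepNumOn (G : SimpleGraph V) (X : Set V) : ℕ :=
  sSup {n | ∃ S : Finset V, ↑S ⊆ X ∧ G.IsIndepSetOn ↑S ∧ S.card = n}

/-- `(T, X)` is a tree decomposition of `G`. -/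
structure IsTreeDecompOn {ι : Type*} (G : SimpleGraph V) (T : SimpleGraph ι) (X : ι → Set V) :
    Prop where
  isTree : T.IsTree
  exists_bag : ∀ v : V, ∃ t, v ∈ X t
  exists_bag_edge : ∀ ⦃u v : V⦄, G.Adj u v → ∃ t, u ∈ X t ∧ v ∈ X t
  subtree_connected : ∀ v : V, (T.induce {t | v ∈ X t}).Connected

/-- The independence number of a tree decomposition with bags `X`. -/
noncomputable def decompIndepNum {ι : Type*} (G : SimpleGraph V) (X : ι → Set V) : ℕ :=
  ⨆ t, indepNumOn G (X t)

/-- The tree-independence number: the minimum independence number over all tree decompositions. -/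
noncomputable def treeIndepNum (G : SimpleGraph V) : ℕ :=
  sInf {n | ∃ (ι : Type) (T : SimpleGraph ι) (X : ι → Set V),
    Finite ι ∧ IsTreeDecompOn G T X ∧ decompIndepNum G X = n}

/-- The graph `G(ℋ)` on the index set of a family of (vertex sets of) subgraphs of `G`:
two distinct indices are adjacent iff the subgraphs share a vertex or are joined by an edge. -/
def packingGraph {J : Type*} (G : SimpleGraph V) (S : J → Set V) : SimpleGraph J where
  Adj i j := i ≠ j ∧ ((S i ∩ S j).Nonempty ∨ ∃ u ∈ S i, ∃ v ∈ S j, G.Adj u v)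
  symm := ⟨by
    rintro i j ⟨hne, h⟩
    refine ⟨hne.symm, ?_⟩
    rcases h with ⟨x, hx⟩ | ⟨u, hu, v, hv, huv⟩
    · exact Or.inl ⟨x, hx.2, hx.1⟩
    · exact Or.inr ⟨v, hv, u, hu, huv.symm⟩⟩
  loopless := ⟨fun i h => h.1 rfl⟩

/-- A graph is chordal if it has no induced cycle of length at least four. -/
def IsChordal (G : SimpleGraph V) : Prop :=
  ∀ n : ℕ, 4 ≤ n → ∀ s : Set V, IsEmpty (G.induce s ≃g cycleGraph n)


/-!
Write `m = 2r + 1` and let `S_j` be the set of vertices at distance at most `r` from `H_j`.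
Two vertex sets are at distance at most `2r + 1` exactly when their `r`-neighbourhoods meet or
are joined by an edge, so `G^m(ℋ)` is the graph `G(𝒮)` of the family `𝒮 = {S_j}`, and each
`S_j` is connected in `G`.

For any family of connected vertex sets `S_j`, a tree decomposition `(T, X)` of `G` gives one of
`G(𝒮)` with bags `Y_t = {j | X_t ∩ S_j ≠ ∅}`: the nodes whose bags meet a connected set form a
subtree, and the members of an independent set of `G(𝒮)` inside `Y_t` have representatives in
`X_t` that are pairwise distinct and non-adjacent, so `α(Y_t) ≤ α(X_t)`.
-/

namespace SimpleGraph

variable {G : SimpleGraph V}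

lemma reachable_of_edist_le {u v : V} {k : ℕ} (h : G.edist u v ≤ k) : G.Reachable u v :=
  reachable_of_edist_ne_top (ne_top_of_le_ne_top (by simp) h)

lemma reachable_and_dist_le_iff_edist_le {u v : V} {k : ℕ} :
    G.Reachable u v ∧ G.dist u v ≤ k ↔ G.edist u v ≤ k := by
  refine ⟨fun ⟨h, hk⟩ => h.coe_dist_eq_edist ▸ mod_cast hk, fun h => ?_⟩
  have hr := reachable_of_edist_le h
  exact ⟨hr, by rw [← hr.coe_dist_eq_edist] at h; exact_mod_cast h⟩

lemma exists_edist_le_of_edist_le_add_add_one {u v : V} {r s : ℕ}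
    (h : G.edist u v ≤ r + s + 1) :
    ∃ a b, G.edist u a ≤ r ∧ G.edist a b ≤ 1 ∧ G.edist b v ≤ s := by
  obtain ⟨p, hp⟩ := (reachable_of_edist_le h).exists_walk_length_eq_edist
  rw [← hp] at h
  norm_cast at h
  refine ⟨p.getVert r, p.getVert (r + 1), ?_, ?_, ?_⟩
  · calc G.edist u (p.getVert r) ≤ (p.take r).length := edist_le _
      _ ≤ r := by simp
  · rw [edist_le_one_iff_adj_or_eq]
    by_cases hr : r < p.length
    · exact .inl (p.adj_getVert_succ hr)
    · rw [p.getVert_of_length_le (by omega), p.getVert_of_length_le (by omega)]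
      exact .inr rfl
  · calc G.edist (p.getVert (r + 1)) v ≤ (p.drop (r + 1)).length := edist_le _
      _ ≤ s := by rw [Walk.drop_length]; exact_mod_cast (by omega : p.length - (r + 1) ≤ s)

lemma power_adj_iff {k : ℕ} {u v : V} :
    (G.power k).Adj u v ↔ u ≠ v ∧ G.edist u v ≤ k := by
  rw [← reachable_and_dist_le_iff_edist_le]
  rfl

def thicken (G : SimpleGraph V) (r : ℕ) (s : Set V) : Set V :=
  {v | ∃ u ∈ s, G.edist v u ≤ r}

lemma subset_thicken (r : ℕ) (s : Set V) : s ⊆ G.thicken r s :=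
  fun u hu => ⟨u, hu, by simp⟩

lemma connected_induce_thicken {s : Set V} (hs : (G.induce s).Connected) (r : ℕ) :
    (G.induce (G.thicken r s)).Connected := by
  classical
  obtain ⟨u₀, hu₀⟩ := hs.nonempty
  refine induce_connected_of_patches u₀ (subset_thicken r s hu₀) fun {v} ⟨u, hu, hvu⟩ => ?_
  obtain ⟨p, hp⟩ := (reachable_of_edist_le hvu).symm.exists_walk_length_eq_edist
  have hsupp : {x | x ∈ p.support} ⊆ G.thicken r s := fun x hx =>
    ⟨u, hu, calc G.edist x u ≤ (p.takeUntil x hx).reverse.length := edist_le _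
      _ ≤ p.length := by simpa using p.length_takeUntil_le_length hx
      _ ≤ r := by rw [hp, edist_comm]; exact hvu⟩
  have hpatch : (G.induce (s ∪ {x | x ∈ p.support})).Connected :=
    induce_union_connected hs.preconnected p.connected_induce_support.preconnected
      ⟨u, hu, p.start_mem_support⟩
  exact ⟨s ∪ {x | x ∈ p.support}, Set.union_subset (subset_thicken r s) hsupp,
    .inl hu₀, .inr p.end_mem_support, hpatch.preconnected _ _⟩

lemma packingGraph_power_eq_packingGraph_thicken {J : Type*} (S : J → Set V) (r : ℕ) :
    packingGraph (G.power (2 * r + 1)) S = packingGraph G (fun j => G.thicken r (S j)) := by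
  have of_edist_le {i j : J} {u v : V} (hu : u ∈ S i) (hv : v ∈ S j)
      (huv : G.edist u v ≤ ↑(2 * r + 1)) :
      (S i ∩ S j).Nonempty ∨ ∃ u ∈ S i, ∃ v ∈ S j, (G.power (2 * r + 1)).Adj u v := by
    by_cases h : u = v
    · exact .inl ⟨u, hu, h ▸ hv⟩
    · exact .inr ⟨u, hu, v, hv, power_adj_iff.2 ⟨h, huv⟩⟩
  ext i j
  refine and_congr_right fun _ => ⟨?_, ?_⟩
  · rintro (⟨x, hxi, hxj⟩ | ⟨u, hu, v, hv, huv⟩)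
    · exact .inl ⟨x, subset_thicken r _ hxi, subset_thicken r _ hxj⟩
    · obtain ⟨a, b, hua, hab, hbv⟩ :=
        exists_edist_le_of_edist_le_add_add_one (r := r) (s := r) (by
          simpa [two_mul] using (power_adj_iff.1 huv).2)
      have ha : a ∈ G.thicken r (S i) := ⟨u, hu, by rwa [edist_comm]⟩
      have hb : b ∈ G.thicken r (S j) := ⟨v, hv, hbv⟩
      rcases edist_le_one_iff_adj_or_eq.1 hab with hab | rfl
      · exact .inr ⟨a, ha, b, hb, hab⟩
      · exact .inl ⟨a, ha, hb⟩
  · rintro (⟨x, ⟨u, hu, hxu⟩, ⟨v, hv, hxv⟩⟩ |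
      ⟨a, ⟨u, hu, hau⟩, b, ⟨v, hv, hbv⟩, hab⟩)
    · refine of_edist_le hu hv ?_
      calc G.edist u v ≤ G.edist u x + G.edist x v := G.edist_triangle
        _ ≤ r + r := by rw [edist_comm]; gcongr
        _ ≤ ↑(2 * r + 1) := by exact_mod_cast (by omega : r + r ≤ 2 * r + 1)
    · refine of_edist_le hu hv ?_
      calc G.edist u v ≤ G.edist u a + G.edist a b + G.edist b v :=
            G.edist_triangle.trans (add_le_add_left G.edist_triangle _)
        _ ≤ r + 1 + r := by
            rw [edist_comm] at hau; gcongr; exact (edist_eq_one_iff_adj.2 hab).le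
        _ = ↑(2 * r + 1) := by push_cast; ring

end SimpleGraph

namespace IsTreeDecompOn

variable {ι : Type*} {G : SimpleGraph V} {T : SimpleGraph ι} {X : ι → Set V}

lemma connected_induce_bags_meeting (hdec : IsTreeDecompOn G T X) {s : Set V}
    (hs : (G.induce s).Connected) : (T.induce {t | (X t ∩ s).Nonempty}).Connected := by
  set A := {t | (X t ∩ s).Nonempty}
  let R (v w : s) : Prop := ∀ t₁ t₂ (h₁ : v.1 ∈ X t₁) (h₂ : w.1 ∈ X t₂),
    (T.induce A).Reachable ⟨t₁, v, h₁, v.2⟩ ⟨t₂, w, h₂, w.2⟩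
  have refl (v : s) : R v v := fun t₁ t₂ h₁ h₂ =>
    ((hdec.subtree_connected v).preconnected ⟨t₁, h₁⟩ ⟨t₂, h₂⟩).map
      (T.induceHomOfLE fun t (ht : v.1 ∈ X t) => (⟨v, ht, v.2⟩ : t ∈ A)).toHom
  have trans {u v w : s} (huv : R u v) (hvw : R v w) : R u w := fun t₁ t₂ h₁ h₂ =>
    have ⟨t, ht⟩ := hdec.exists_bag v
    (huv t₁ t h₁ ht).trans (hvw t t₂ ht h₂)
  have of_adj {v w : s} (hvw : (G.induce s).Adj v w) : R v w := fun t₁ t₂ h₁ h₂ =>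
    have ⟨t, hvt, hwt⟩ := hdec.exists_bag_edge hvw
    (refl v t₁ t h₁ hvt).trans (refl w t t₂ hwt h₂)
  have of_reachable {v w : s} : (G.induce s).Reachable v w → R v w := by
    rintro ⟨p⟩
    induction p with
    | nil => exact refl _
    | cons hadj _ ih => exact trans (of_adj hadj) ih
  obtain ⟨v₀⟩ := hs.nonempty
  obtain ⟨t₀, ht₀⟩ := hdec.exists_bag v₀
  have : Nonempty A := ⟨⟨t₀, v₀, ht₀, v₀.2⟩⟩
  refine ⟨fun ⟨t₁, v, hv₁, hvs⟩ ⟨t₂, w, hw₂, hws⟩ => ?_⟩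
  exact of_reachable (hs.preconnected ⟨v, hvs⟩ ⟨w, hws⟩) t₁ t₂ hv₁ hw₂

lemma toPackingGraph (hdec : IsTreeDecompOn G T X) {J : Type*} {S : J → Set V}
    (hS : ∀ j, (G.induce (S j)).Connected) :
    IsTreeDecompOn (packingGraph G S) T fun t => {j | (X t ∩ S j).Nonempty} where
  isTree := hdec.isTree
  exists_bag j :=
    have ⟨v, hv⟩ := (hS j).nonempty
    have ⟨t, ht⟩ := hdec.exists_bag v
    ⟨t, v, ht, hv⟩
  exists_bag_edge := by
    rintro i j ⟨-, ⟨x, hxi, hxj⟩ | ⟨u, hu, v, hv, huv⟩⟩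
    · obtain ⟨t, ht⟩ := hdec.exists_bag x
      exact ⟨t, ⟨x, ht, hxi⟩, ⟨x, ht, hxj⟩⟩
    · obtain ⟨t, hut, hvt⟩ := hdec.exists_bag_edge huv
      exact ⟨t, ⟨u, hut, hu⟩, ⟨v, hvt, hv⟩⟩
  subtree_connected j := hdec.connected_induce_bags_meeting (hS j)

end IsTreeDecompOn

section IndepNum

variable {G : SimpleGraph V} {X : Set V}

lemma card_le_indepNumOn [Finite V] {S : Finset V} (hSX : ↑S ⊆ X) (hS : G.IsIndepSetOn S) :
    S.card ≤ indepNumOn G X := by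
  have := Fintype.ofFinite V
  refine le_csSup ⟨Fintype.card V, ?_⟩ ⟨S, hSX, hS, rfl⟩
  rintro _ ⟨S', -, -, rfl⟩
  exact S'.card_le_univ

lemma indepNumOn_le {n : ℕ}
    (h : ∀ S : Finset V, ↑S ⊆ X → G.IsIndepSetOn S → S.card ≤ n) :
    indepNumOn G X ≤ n :=
  csSup_le' <| by
    rintro _ ⟨S, hSX, hS, rfl⟩
    exact h S hSX hS

lemma indepNumOn_packingGraph_le [Finite V] {J : Type*} (S : J → Set V) (X : Set V) :
    indepNumOn (packingGraph G S) {j | (X ∩ S j).Nonempty} ≤ indepNumOn G X := by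
  classical
  refine indepNumOn_le fun I hI hind => ?_
  choose f hf using fun j (hj : j ∈ I) => hI hj
  have separated {i j : J} (hi : i ∈ I) (hj : j ∈ I) (hij : i ≠ j) :
      f i hi ≠ f j hj ∧ ¬ G.Adj (f i hi) (f j hj) := by
    have hnadj := not_and.1 (hind hi hj hij) hij
    rw [not_or] at hnadj
    refine ⟨fun h => hnadj.1 ⟨f i hi, (hf i hi).2, h ▸ (hf j hj).2⟩, fun h => ?_⟩
    exact hnadj.2 ⟨f i hi, (hf i hi).2, f j hj, (hf j hj).2, h⟩
  have hinj : Function.Injective fun j : I => f j.1 j.2 := by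
    rintro ⟨i, hi⟩ ⟨j, hj⟩ h
    by_contra hij
    exact (separated hi hj (Subtype.coe_ne_coe.2 hij)).1 h
  calc I.card = (I.attach.image fun j => f j.1 j.2).card := by
        rw [Finset.card_image_of_injective _ hinj, Finset.card_attach]
    _ ≤ indepNumOn G X := by
        refine card_le_indepNumOn ?_ ?_
        · simp only [Finset.coe_image, Set.image_subset_iff]
          exact fun j _ => (hf j.1 j.2).1
        · simp only [SimpleGraph.IsIndepSetOn, Finset.coe_image]
          rintro _ ⟨⟨i, hi⟩, -, rfl⟩ _ ⟨⟨j, hj⟩, -, rfl⟩ hne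
          exact (separated hi hj fun hij => hne (by subst hij; rfl)).2

end IndepNum

lemma isTreeDecompOn_unit (G : SimpleGraph V) :
    IsTreeDecompOn G (⊥ : SimpleGraph Unit) fun _ => Set.univ where
  isTree := .of_subsingleton
  exists_bag _ := ⟨(), trivial⟩
  exists_bag_edge _ _ _ := ⟨(), trivial, trivial⟩
  subtree_connected v := by
    have : Nonempty {t : Unit | v ∈ Set.univ} := ⟨⟨(), trivial⟩⟩
    exact .of_subsingleton

lemma exists_isTreeDecompOn_decompIndepNum_eq_treeIndepNum (G : SimpleGraph V) :
    ∃ (ι : Type) (T : SimpleGraph ι) (X : ι → Set V),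
      Finite ι ∧ IsTreeDecompOn G T X ∧ decompIndepNum G X = treeIndepNum G :=
  Nat.sInf_mem (s := {n | ∃ (ι : Type) (T : SimpleGraph ι) (X : ι → Set V),
    Finite ι ∧ IsTreeDecompOn G T X ∧ decompIndepNum G X = n})
    ⟨_, Unit, ⊥, _, inferInstance, isTreeDecompOn_unit G, rfl⟩

lemma treeIndepNum_le_decompIndepNum {G : SimpleGraph V} {ι : Type} [Finite ι]
    {T : SimpleGraph ι} {X : ι → Set V} (hdec : IsTreeDecompOn G T X) :
    treeIndepNum G ≤ decompIndepNum G X :=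
  Nat.sInf_le ⟨ι, T, X, inferInstance, hdec, rfl⟩

theorem treeIndepNum_packingGraph_le [Finite V] {G : SimpleGraph V} {J : Type*} (S : J → Set V)
    (hS : ∀ j, (G.induce (S j)).Connected) :
    treeIndepNum (packingGraph G S) ≤ treeIndepNum G := by
  obtain ⟨ι, T, X, hι, hdec, hX⟩ := exists_isTreeDecompOn_decompIndepNum_eq_treeIndepNum G
  calc treeIndepNum (packingGraph G S)
      _ ≤ decompIndepNum (packingGraph G S) fun t => {j | (X t ∩ S j).Nonempty} :=
        treeIndepNum_le_decompIndepNum (hdec.toPackingGraph hS)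
      _ ≤ decompIndepNum G X :=
        ciSup_mono (Set.finite_range _).bddAbove fun t => indepNumOn_packingGraph_le S (X t)
      _ = treeIndepNum G := hX

theorem stmt_8_general {V J : Type*} [Fintype V] (G : SimpleGraph V) (m : ℕ)
    (hodd : Odd m) (H : J → G.Subgraph) (hH : ∀ j, (H j).Connected) :
    treeIndepNum (packingGraph (G.power m) (fun j => (H j).verts)) ≤ treeIndepNum G := by
  obtain ⟨r, rfl⟩ := hodd
  rw [G.packingGraph_power_eq_packingGraph_thicken]
  exact treeIndepNum_packingGraph_le _ fun j => G.connected_induce_thicken (hH j).induce_verts r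

theorem stmt_8 {V J : Type*} [Fintype V] [Finite J] (G : SimpleGraph V) (m : ℕ)
    (hm : 0 < m) (hodd : Odd m) (H : J → G.Subgraph) (hH : ∀ j, (H j).Connected) :
    treeIndepNum (packingGraph (G.power m) (fun j => (H j).verts)) ≤ treeIndepNum G :=
  stmt_8_general G m hodd H hH
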